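/- arXiv:1401.0149 — 5 statements merged into one kernel-verified Lean document; each statement's English description precedes it below -/
import Mathlib

section
/- Let (G,H,▷,∂) be a crossed module. The family Φ_{(γ,χ)}(g) = (γgγ⁻¹, χ·((γgγ⁻¹)▷χ⁻¹)) is a natural transformation from the conjugation functor Φ_γ to Φ_{∂(χ)γ}: for every morphism (g₁,η) : g₁ → g₂ = ∂(η)g₁ in 𝒢, we have Φ_{γ₂}(g₁,η) ∘ Φ_{(γ,χ)}(g₁) = Φ_{(γ,χ)}(g₂) ∘ Φ_γ(g₁,η), where γ₂ = ∂(χ)γ. In H this amounts to the identity (γ₂▷η)·χ·((γg₁γ⁻¹)▷χ⁻¹) = χ·((γg₂γ⁻¹)▷χ⁻¹)·(γ▷η). -/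
/-! Both sides are products of conjugates of `γ ▷ η` and `χ`. The Peiffer identity turns an
action by `∂(ζ) g` into conjugation by `ζ` after acting by `g`, and equivariance of `∂` rewrites
`γ g₂ γ⁻¹ = ∂(γ ▷ η) (γ g₁ γ⁻¹)`; after these rewrites the identity holds in every group. -/

theorem map_mul_smul_eq_conj {G H : Type*} [Group G] [Group H] [MulAction G H] (pd : H → G)
    (hpeif2 : ∀ η ζ : H, pd η • ζ = η * ζ * η⁻¹) (η : H) (g : G) (ζ : H) :
    (pd η * g) • ζ = η * (g • ζ) * η⁻¹ := by
  rw [mul_smul, hpeif2]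

theorem conj_map_mul {G H : Type*} [Group G] [SMul G H] (pd : H → G)
    (hpeif1 : ∀ (g : G) (η : H), pd (g • η) = g * pd η * g⁻¹) (γ g : G) (η : H) :
    γ * (pd η * g) * γ⁻¹ = pd (γ • η) * (γ * g * γ⁻¹) := by
  rw [hpeif1]
  group

/-- naturality of `Φ_{(γ,χ)}` for the adjoint action: for a morphism
`(g₁,η) : g₁ → g₂ = ∂(η)g₁` and `γ₂ = ∂(χ)γ`, the naturality square commutes, i.e.
in `H`: `(γ₂▷η)·χ·((γg₁γ⁻¹)▷χ⁻¹) = χ·((γg₂γ⁻¹)▷χ⁻¹)·(γ▷η)`. -/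
theorem crossedModule_adjoint_naturality
    {G H : Type*} [Group G] [Group H] [MulDistribMulAction G H]
    (pd : H →* G)
    (hpeif1 : ∀ (g : G) (η : H), pd (g • η) = g * pd η * g⁻¹)
    (hpeif2 : ∀ η ζ : H, (pd η) • ζ = η * ζ * η⁻¹)
    (γ g₁ g₂ : G) (χ η : H) (hg : g₂ = pd η * g₁) :
    ((pd χ * γ) • η) * (χ * ((γ * g₁ * γ⁻¹) • χ⁻¹))
      = (χ * ((γ * g₂ * γ⁻¹) • χ⁻¹)) * (γ • η) := by
  subst hg
  rw [conj_map_mul pd hpeif1, map_mul_smul_eq_conj pd hpeif2,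
    map_mul_smul_eq_conj pd hpeif2]
  group
end

section
/- Let (G,H,▷,∂) be a crossed module. The natural transformations Φ_{(γ,χ)} for the adjoint action satisfy the vertical-composition law (condition F1): for all g ∈ G, Φ_{(γ₂,χ₂)}(g) ∘ Φ_{(γ₁,χ₁)}(g) = Φ_{(γ₁,χ₂χ₁)}(g) where γ₂ = ∂(χ₁)γ₁; in H this amounts to χ₂·((γ₂gγ₂⁻¹)▷χ₂⁻¹)·χ₁·((γ₁gγ₁⁻¹)▷χ₁⁻¹) = χ₂χ₁·((γ₁gγ₁⁻¹)▷(χ₂χ₁)⁻¹). -/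
/-! The Peiffer identity `∂(χ) ▷ ζ = χζχ⁻¹` turns the action of the conjugate `∂(χ₁) a ∂(χ₁)⁻¹`,
with `a = γ₁gγ₁⁻¹`, into conjugation by `χ₁` of the action of `a`; after that the two factors
`χ₁⁻¹ χ₁` in the middle cancel and the remaining `a`-actions merge into `a ▷ (χ₂χ₁)⁻¹`. -/

theorem conj_smul_eq_of_peiffer {G H : Type*} [Group G] [Group H] [MulDistribMulAction G H]
    (pd : H →* G) (hpeif2 : ∀ η ζ : H, (pd η) • ζ = η * ζ * η⁻¹) (χ η : H) (a : G) :
    (pd χ * a * (pd χ)⁻¹) • η = χ * (a • (χ⁻¹ * η * χ)) * χ⁻¹ := by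
  rw [← map_inv, mul_smul, mul_smul, hpeif2, hpeif2, inv_inv]

theorem crossedModule_adjoint_F1_general
    {G H : Type*} [Group G] [Group H] [MulDistribMulAction G H]
    (pd : H →* G)
    (hpeif2 : ∀ η ζ : H, (pd η) • ζ = η * ζ * η⁻¹)
    (γ₁ γ₂ g : G) (χ₁ χ₂ : H) (hγ : γ₂ = pd χ₁ * γ₁) :
    (χ₂ * ((γ₂ * g * γ₂⁻¹) • χ₂⁻¹)) * (χ₁ * ((γ₁ * g * γ₁⁻¹) • χ₁⁻¹))
      = (χ₂ * χ₁) * ((γ₁ * g * γ₁⁻¹) • (χ₂ * χ₁)⁻¹) := by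
  set a := γ₁ * g * γ₁⁻¹ with ha
  have hconj : γ₂ * g * γ₂⁻¹ = pd χ₁ * a * (pd χ₁)⁻¹ := by rw [hγ, ha]; group
  rw [hconj, conj_smul_eq_of_peiffer pd hpeif2]
  calc χ₂ * (χ₁ * a • (χ₁⁻¹ * χ₂⁻¹ * χ₁) * χ₁⁻¹) * (χ₁ * a • χ₁⁻¹)
      = χ₂ * χ₁ * (a • (χ₁⁻¹ * χ₂⁻¹ * χ₁) * a • χ₁⁻¹) := by group
    _ = χ₂ * χ₁ * a • (χ₂ * χ₁)⁻¹ := by rw [← smul_mul']; group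

/-- condition F1 for the adjoint action natural transformations:
`Φ_{(γ₂,χ₂)}(g) ∘ Φ_{(γ₁,χ₁)}(g) = Φ_{(γ₁,χ₂χ₁)}(g)` where `γ₂ = ∂(χ₁)γ₁`;
in `H` this is
`χ₂·((γ₂gγ₂⁻¹)▷χ₂⁻¹)·χ₁·((γ₁gγ₁⁻¹)▷χ₁⁻¹) = χ₂χ₁·((γ₁gγ₁⁻¹)▷(χ₂χ₁)⁻¹)`. -/
theorem crossedModule_adjoint_F1
    {G H : Type*} [Group G] [Group H] [MulDistribMulAction G H]
    (pd : H →* G)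
    (hpeif1 : ∀ (g : G) (η : H), pd (g • η) = g * pd η * g⁻¹)
    (hpeif2 : ∀ η ζ : H, (pd η) • ζ = η * ζ * η⁻¹)
    (γ₁ γ₂ g : G) (χ₁ χ₂ : H) (hγ : γ₂ = pd χ₁ * γ₁) :
    (χ₂ * ((γ₂ * g * γ₂⁻¹) • χ₂⁻¹)) * (χ₁ * ((γ₁ * g * γ₁⁻¹) • χ₁⁻¹))
      = (χ₂ * χ₁) * ((γ₁ * g * γ₁⁻¹) • (χ₂ * χ₁)⁻¹) :=
  crossedModule_adjoint_F1_general pd hpeif2 γ₁ γ₂ g χ₁ χ₂ hγ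
end

section
/- Let (G,H,▷,∂) be a crossed module. The adjoint action natural transformations satisfy condition F2: for all g ∈ G, Φ_{(γ₁,χ₁)}(Φ_{γ₄}(g)) ∘ Φ_{γ₁}(Φ_{(γ₃,χ₂)}(g)) = Φ_{(γ₁γ₃, χ₁·(γ₁▷χ₂))}(g), where γ₄ = ∂(χ₂)γ₃. -/
/-!
Write `a = (γ₁γ₃) g (γ₁γ₃)⁻¹` and `β = γ₁ ▷ χ₂`. Equivariance of `∂` turns the object
`γ₁γ₄ g (γ₁γ₄)⁻¹` into `∂(β) a ∂(β)⁻¹`, and the action of `G` carries the `H`-component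
`χ₂ · ((γ₃gγ₃⁻¹) ▷ χ₂⁻¹)` to `β · (a ▷ β⁻¹)`. What remains is the identity
`χ · ((∂(β) a ∂(β)⁻¹) ▷ χ⁻¹) · β · (a ▷ β⁻¹) = χβ · (a ▷ (χβ)⁻¹)`, which follows from the
Peiffer identity: acting by `∂(β)` is conjugation by `β`.
-/

section CrossedModule

variable {G H : Type*} [Group G] [Group H] [MulDistribMulAction G H]

theorem smul_mul_smul_inv (γ g : G) (χ : H) :
    γ • (χ * (g • χ⁻¹)) = γ • χ * ((γ * g * γ⁻¹) • (γ • χ)⁻¹) := by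
  rw [smul_mul', ← smul_inv', ← mul_smul, ← mul_smul, inv_mul_cancel_right]

theorem conj_pd_smul (pd : H →* G) (peiffer : ∀ η ζ : H, (pd η) • ζ = η * ζ * η⁻¹)
    (β x : H) (a : G) :
    (pd β * a * (pd β)⁻¹) • x = β * (a • (β⁻¹ * x * β)) * β⁻¹ := by
  rw [mul_smul, mul_smul, ← map_inv, peiffer, peiffer, inv_inv]

theorem mul_conj_pd_smul_inv_mul (pd : H →* G)
    (peiffer : ∀ η ζ : H, (pd η) • ζ = η * ζ * η⁻¹) (χ β : H) (a : G) :
    χ * ((pd β * a * (pd β)⁻¹) • χ⁻¹) * (β * (a • β⁻¹))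
      = χ * β * (a • (χ * β)⁻¹) := by
  rw [conj_pd_smul pd peiffer]
  simp only [mul_inv_rev, smul_mul', smul_inv']
  group

end CrossedModule

/-- condition F2 for the adjoint action:
`Φ_{(γ₁,χ₁)}(Φ_{γ₄}(g)) ∘ Φ_{γ₁}(Φ_{(γ₃,χ₂)}(g)) = Φ_{(γ₁γ₃, χ₁·(γ₁▷χ₂))}(g)`
where `γ₄ = ∂(χ₂)γ₃`.  Both sides are morphisms of `𝒢` with source
`γ₁γ₃g(γ₁γ₃)⁻¹`, and the equality of their `H`-components is stated. -/
theorem crossedModule_adjoint_F2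
    {G H : Type*} [Group G] [Group H] [MulDistribMulAction G H]
    (pd : H →* G)
    (hpeif1 : ∀ (g : G) (η : H), pd (g • η) = g * pd η * g⁻¹)
    (hpeif2 : ∀ η ζ : H, (pd η) • ζ = η * ζ * η⁻¹)
    (γ₁ γ₃ γ₄ g : G) (χ₁ χ₂ : H) (hγ : γ₄ = pd χ₂ * γ₃) :
    -- sources agree
    (γ₁ * (γ₃ * g * γ₃⁻¹) * γ₁⁻¹ = (γ₁ * γ₃) * g * (γ₁ * γ₃)⁻¹) ∧
    -- H-components agree
    ((χ₁ * ((γ₁ * (γ₄ * g * γ₄⁻¹) * γ₁⁻¹) • χ₁⁻¹))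
        * (γ₁ • (χ₂ * ((γ₃ * g * γ₃⁻¹) • χ₂⁻¹)))
      = (χ₁ * (γ₁ • χ₂))
        * (((γ₁ * γ₃) * g * (γ₁ * γ₃)⁻¹) • (χ₁ * (γ₁ • χ₂))⁻¹)) := by
  have hsrc : γ₁ * (γ₃ * g * γ₃⁻¹) * γ₁⁻¹ = (γ₁ * γ₃) * g * (γ₁ * γ₃)⁻¹ := by group
  refine ⟨hsrc, ?_⟩
  have htgt : γ₁ * (γ₄ * g * γ₄⁻¹) * γ₁⁻¹
      = pd (γ₁ • χ₂) * ((γ₁ * γ₃) * g * (γ₁ * γ₃)⁻¹) * (pd (γ₁ • χ₂))⁻¹ := by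
    rw [hγ, hpeif1]
    group
  rw [htgt, smul_mul_smul_inv, hsrc, mul_conj_pd_smul_inv_mul pd hpeif2]
end

section
/- Let (G,H,▷,∂) be a crossed module with associated 2-group 𝒢 acting on itself by the adjoint action. In the horizontal 2-category H(𝒢 ⫽ 𝒢), the 2-morphisms with source (g,η) are labeled by χ ∈ ker(∂), and the target of the 2-morphism labeled χ is (g, η·χ·(g▷χ⁻¹)). Moreover the map χ ↦ (target morphism) is compatible with multiplication in ker(∂): applying χ' after χ yields target (g, η·(χ'χ)·(g▷(χ'χ)⁻¹)). -/
/-! The Peiffer identity `∂ψ ▷ ζ = ψζψ⁻¹` makes `ker ∂` central in `H`, and equivariance of `∂`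
keeps `χ·(g▷χ⁻¹)` in `ker ∂`. As `g ▷ -` is a homomorphism, `g▷(χ'χ)⁻¹ = (g▷χ⁻¹)(g▷χ'⁻¹)`, so
the composite target is the one labelled `χ'χ` once the central `χ'` is moved past `χ·(g▷χ⁻¹)`. -/

theorem commute_of_map_eq_one {G H : Type*} [Group G] [Group H] [MulAction G H]
    (pd : H →* G) (hpeiffer : ∀ η ζ : H, pd η • ζ = η * ζ * η⁻¹)
    {ψ : H} (hψ : pd ψ = 1) (ζ : H) : Commute ψ ζ := by
  have hconj := hpeiffer ψ ζ
  rw [hψ, one_smul] at hconj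
  exact mul_inv_eq_iff_eq_mul.mp hconj.symm

theorem map_mul_smul_inv_eq_one {G H : Type*} [Group G] [Group H] [MulDistribMulAction G H]
    (pd : H →* G) (hequiv : ∀ (g : G) (η : H), pd (g • η) = g * pd η * g⁻¹)
    (g : G) {χ : H} (hχ : pd χ = 1) : pd (χ * (g • χ⁻¹)) = 1 := by
  rw [map_mul, hequiv, map_inv, hχ, inv_one, mul_one, mul_inv_cancel, one_mul]

theorem mul_mul_smul_inv_mul_mul_smul_inv {G H : Type*} [Monoid G] [Group H]
    [MulDistribMulAction G H] (g : G) (η χ χ' : H) (h : Commute χ' (χ * (g • χ⁻¹))) :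
    (η * χ * (g • χ⁻¹)) * χ' * (g • χ'⁻¹) = η * (χ' * χ) * (g • (χ' * χ)⁻¹) :=
  calc (η * χ * (g • χ⁻¹)) * χ' * (g • χ'⁻¹)
      = η * (χ * (g • χ⁻¹) * χ') * (g • χ'⁻¹) := by simp only [mul_assoc]
    _ = η * (χ' * (χ * (g • χ⁻¹))) * (g • χ'⁻¹) := by rw [h.eq]
    _ = η * (χ' * χ) * (g • (χ' * χ)⁻¹) := by
        rw [mul_inv_rev, smul_mul']
        simp only [mul_assoc]

/-- in the horizontal 2-category `H(𝒢 ⫽ 𝒢)` of the adjoint action,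
2-morphisms with source `(g,η)` are labelled by `χ ∈ ker ∂`, the target of the
2-morphism labelled `χ` is `(g, η·χ·(g▷χ⁻¹))`, and applying `χ'` after `χ` has
target `(g, η·(χ'χ)·(g▷(χ'χ)⁻¹))`, so targets compose via multiplication in
`ker ∂`. -/
theorem adjoint_horizontal_two_category_targets
    {G H : Type*} [Group G] [Group H] [MulDistribMulAction G H]
    (pd : H →* G)
    (hpeif1 : ∀ (g : G) (η : H), pd (g • η) = g * pd η * g⁻¹)
    (hpeif2 : ∀ η ζ : H, (pd η) • ζ = η * ζ * η⁻¹)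
    (g : G) (η χ χ' : H) (hχ : pd χ = 1) (hχ' : pd χ' = 1) :
    -- the boundary of the square labelled χ is trivial, so it is a 2-morphism
    pd (χ * (g • χ⁻¹)) = 1 ∧
    -- applying χ' after χ yields the target labelled by χ'χ
    (η * χ * (g • χ⁻¹)) * χ' * (g • χ'⁻¹)
      = η * (χ' * χ) * (g • (χ' * χ)⁻¹) :=
  ⟨map_mul_smul_inv_eq_one pd hpeif1 g hχ,
    mul_mul_smul_inv_mul_mul_smul_inv g η χ χ' (commute_of_map_eq_one pd hpeif2 hχ' _)⟩
end

section
/- Let (G,H,▷,∂) be a crossed module and consider squares ⟨(γ,χ),(g,η)⟩ with horizontal and vertical composition: ⟨(γ₂,χ₂),(g₂,η₂)⟩ ∘_h ⟨(γ₁,χ₁),(g₁,η₁)⟩ = ⟨(γ₁,χ₂χ₁),(g₁,η₂η₁)⟩ (when γ₂ = ∂(χ₁)γ₁ and g₂ = ∂(η₁)g₁), and ⟨(γ₁,χ₁),(γ₃,χ₂)⊳(g,η)⟩ ∘_v ⟨(γ₃,χ₂),(g,η)⟩ = ⟨(γ₁γ₃, χ₁(γ₁▷χ₂)),(g,η)⟩,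 where (γ,χ)⊳(g,η) = (γgγ⁻¹, χ·(γ▷η)·((γgγ⁻¹)▷χ⁻¹)). Then the interchange law holds: composing a 2×2 array of composable squares horizontally-then-vertically equals composing vertically-then-horizontally. -/
/-- The adjoint action of `G ⋉ H` on morphisms:
`(γ,χ) ⊳ (g,η) = (γgγ⁻¹, χ·(γ▷η)·((γgγ⁻¹)▷χ⁻¹))`. -/
def adAct {G H : Type*} [Group G] [Group H] [MulDistribMulAction G H]
    (p q : G × H) : G × H :=
  (p.1 * q.1 * p.1⁻¹, p.2 * (p.1 • q.2) * ((p.1 * q.1 * p.1⁻¹) • p.2⁻¹))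

/-- Horizontal composition of squares `⟨(γ₁,χ₁),(g₁,η₁)⟩` (left) and
`⟨(γ₂,χ₂),(g₂,η₂)⟩` (right): result `⟨(γ₁,χ₂χ₁),(g₁,η₂η₁)⟩`. -/
def sqHComp {G H : Type*} [Group G] [Group H] [MulDistribMulAction G H]
    (σ τ : (G × H) × (G × H)) : (G × H) × (G × H) :=
  ((σ.1.1, τ.1.2 * σ.1.2), (σ.2.1, τ.2.2 * σ.2.2))

/-- Vertical composition of squares: top `⟨(γ₃,χ₂),(g,η)⟩`, bottom
`⟨(γ₁,χ₁), (γ₃,χ₂)⊳(g,η)⟩`: result `⟨(γ₁γ₃, χ₁(γ₁▷χ₂)),(g,η)⟩`. -/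
def sqVComp {G H : Type*} [Group G] [Group H] [MulDistribMulAction G H]
    (top bot : (G × H) × (G × H)) : (G × H) × (G × H) :=
  ((bot.1.1 * top.1.1, bot.1.2 * (bot.1.1 • top.1.2)), top.2)

/-!
Both composites carry the same group-element data, and their `H`-labels are
`d · c · (β ▷ b) · (β ▷ a)` and `d · ((∂(c)β) ▷ b) · c · (β ▷ a)`. They agree because the Peiffer
identity `∂(χ) ▷ ζ = χ ζ χ⁻¹` lets `c` move past `β ▷ b`.
-/

theorem smul_mul_of_peiffer {G H : Type*} [Group H] [SMul G H] (pd : H → G)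
    (hpeiffer : ∀ η ζ : H, pd η • ζ = η * ζ * η⁻¹) (η ζ : H) :
    pd η • ζ * η = η * ζ := by
  rw [hpeiffer, inv_mul_cancel_right]

theorem transformation_double_category_interchange_general
    {G H : Type*} [Group G] [Group H] [MulDistribMulAction G H]
    (pd : H →* G)
    (hpeif2 : ∀ η ζ : H, (pd η) • ζ = η * ζ * η⁻¹)
    (α β g : G) (a b c d m n : H) :
    sqVComp
      (sqHComp (((α, a), (g, m)) : (G × H) × (G × H))
               ((pd a * α, b), (pd m * g, n)))
      (sqHComp ((β, c), adAct (α, a) (g, m))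
               ((pd c * β, d), adAct (pd a * α, b) (pd m * g, n)))
    = sqHComp
        (sqVComp ((α, a), (g, m)) ((β, c), adAct (α, a) (g, m)))
        (sqVComp ((pd a * α, b), (pd m * g, n))
                 ((pd c * β, d), adAct (pd a * α, b) (pd m * g, n))) := by
  have peiffer : c * (β • b) = pd c • β • b * c := (smul_mul_of_peiffer pd hpeif2 c _).symm
  simp only [sqVComp, sqHComp, smul_mul', mul_smul, mul_assoc]
  rw [← mul_assoc c, peiffer, mul_assoc]

/-- interchange law for a 2×2 array of composable squares of the
transformation double category: composing horizontally then vertically equals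
composing vertically then horizontally.  The array is parametrized by its
top-left square `⟨(α,a),(g,m)⟩` together with the labels `b, n` of the top-right
square, and the labels `(β,c)` and `d` of the bottom row; composability then
determines all remaining boundary data. -/
theorem transformation_double_category_interchange
    {G H : Type*} [Group G] [Group H] [MulDistribMulAction G H]
    (pd : H →* G)
    (hpeif1 : ∀ (g : G) (η : H), pd (g • η) = g * pd η * g⁻¹)
    (hpeif2 : ∀ η ζ : H, (pd η) • ζ = η * ζ * η⁻¹)
    (α β g : G) (a b c d m n : H) :
    sqVComp
      (sqHComp (((α, a), (g, m)) : (G × H) × (G × H))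
               ((pd a * α, b), (pd m * g, n)))
      (sqHComp ((β, c), adAct (α, a) (g, m))
               ((pd c * β, d), adAct (pd a * α, b) (pd m * g, n)))
    = sqHComp
        (sqVComp ((α, a), (g, m)) ((β, c), adAct (α, a) (g, m)))
        (sqVComp ((pd a * α, b), (pd m * g, n))
                 ((pd c * β, d), adAct (pd a * α, b) (pd m * g, n))) :=
  transformation_double_category_interchange_general pd hpeif2 α β g a b c d m n
end
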